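/- Let f : ℝ≥0 → ℝ be continuous with f(0) ∈ [0,h] for some h > 0. Then there exists a unique pair of continuous functions (c⁰, cʰ) with c⁰(0) = cʰ(0) = 0 such that: (1) Λ(t) := f(t) + cʰ(t) + c⁰(t) ∈ [0,h] for all t; (2) c⁰ is non-decreasing and cʰ is non-increasing; (3) c⁰ is constant on every interval on which Λ never equals 0, and cʰ is constant on every interval on which Λ never equals h. -/

import Mathlib

/-!
Existence: iterate `c⁰ₙ₊₁ = Γ(f + cʰₙ)`, `cʰₙ₊₁ = -Γ(h - f - c⁰ₙ₊₁)`, where `Γ` is the one-sided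
Skorohod compensator. Both sequences are monotone in `n`, and a strict change of `cʰ` at stage
`m + 2` before time `s` forces a strict change at stage `m + 1` at an earlier time, across which
`f` rises by at least `h`. By uniform continuity such a rise takes time at least `δ > 0` on
`[0, T]`, so the iteration is stationary on `[0, T]` after `T / δ + 1` steps. The locally
stationary limit is a fixed point of the two compensations, which is exactly a solution.

Uniqueness: a comparison argument shows that two solutions have the same reflected path; then
`c⁰ - d⁰ = dʰ - cʰ` is locally constant, since near every time the path avoids `0` or `h`.
-/

open Set
open scoped NNReal ENNReal

/-- Solution data for the two-sided Skorohod reflection problem of `f` on `[0,h]`: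
`c0` and `ch` are the compensators at `0` and at `h`,
and `fun t => f t + ch t + c0 t` is the reflected path `Λ_{0,h}(f)`.
The support conditions on the measures `dc⁰` and `d(−cʰ)` are phrased as:
the compensator is constant on every (closed) interval on which the reflected
path avoids the corresponding boundary. -/
structure SkorohodPair (h : ℝ) (f c0 ch : ℝ≥0 → ℝ) : Prop where
  cont0 : Continuous c0
  conth : Continuous ch
  init0 : c0 0 = 0
  inith : ch 0 = 0
  mem_Icc : ∀ t, f t + ch t + c0 t ∈ Set.Icc (0 : ℝ) h
  mono0 : Monotone c0
  antih : Antitone ch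
  flat0 : ∀ a b : ℝ≥0, a ≤ b → (∀ t ∈ Set.Icc a b, f t + ch t + c0 t ≠ 0) → c0 b = c0 a
  flath : ∀ a b : ℝ≥0, a ≤ b → (∀ t ∈ Set.Icc a b, f t + ch t + c0 t ≠ h) → ch b = ch a

open Filter Topology

section OrderTopology

variable {α : Type*} [LinearOrder α] [TopologicalSpace α] [OrderTopology α]

lemma Filter.Eventually.forall_uIcc {p : α → Prop} {t : α} (hp : ∀ᶠ x in 𝓝 t, p x) :
    ∀ᶠ y in 𝓝 t, ∀ x ∈ uIcc t y, p x :=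
  mem_of_superset (ordConnectedComponent_mem_nhds.2 hp) fun _ hy => mem_ordConnectedComponent.1 hy

lemma exists_forall_Ioc_pos [CompactIccSpace α] {D : α → ℝ} (hD : Continuous D) {a t : α}
    (hat : a ≤ t) (ha : D a ≤ 0) : ∃ s ∈ Icc a t, D s ≤ 0 ∧ ∀ x ∈ Ioc s t, 0 < D x := by
  obtain ⟨s, ⟨hs, hDs⟩, hmax⟩ := (isCompact_Icc.inter_right (isClosed_le hD continuous_const))
    |>.exists_isGreatest ⟨a, ⟨left_mem_Icc.2 hat, ha⟩⟩
  refine ⟨s, hs, hDs, fun x hx => ?_⟩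
  by_contra! hDx
  exact hx.1.not_ge (hmax ⟨⟨hs.1.trans hx.1.le, hx.2⟩, hDx⟩)

lemma eq_of_continuous_of_forall_Ioc [DenselyOrdered α] {g : α → ℝ} (hg : Continuous g) {a b : α}
    (hab : a ≤ b) (hflat : ∀ x ∈ Ioc a b, g x = g b) : g a = g b := by
  rcases hab.eq_or_lt with rfl | hlt
  · rfl
  have ha : a ∈ closure (Ioc a b) := by
    rw [closure_Ioc hlt.ne]
    exact left_mem_Icc.2 hab
  exact closure_minimal hflat (isClosed_eq hg continuous_const) ha

end OrderTopology

lemma continuous_sSup_image_Icc_zero {φ : ℝ≥0 → ℝ} (hφ : Continuous φ) :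
    Continuous fun t => sSup (φ '' Icc 0 t) := by
  have hIcc (t : ℝ≥0) : (· * t) '' Icc 0 1 = Icc 0 t := by
    simpa only [zero_mul, one_mul] using image_mul_right_Icc (zero_le_one' ℝ≥0) (zero_le : 0 ≤ t)
  convert (isCompact_Icc (a := (0 : ℝ≥0)) (b := 1)).continuous_sSup
    (f := fun t u => φ (u * t)) (by fun_prop) using 2 with t
  rw [← hIcc, image_image]

/-- The one-sided Skorohod compensator `Γ g t = sup_{s ≤ t} (g s)⁻`: the least nondecreasing
`c` with `g + c ≥ 0`. -/
noncomputable def skorohodCompensator (g : ℝ≥0 → ℝ) (t : ℝ≥0) : ℝ :=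
  sSup ((fun s => (g s)⁻) '' Icc 0 t)

section SkorohodCompensator

variable {g g' : ℝ≥0 → ℝ} {s t : ℝ≥0}

lemma bddAbove_image_negPart (hg : Continuous g) (t : ℝ≥0) :
    BddAbove ((fun s => (g s)⁻) '' Icc 0 t) :=
  isCompact_Icc.bddAbove_image (by fun_prop)

lemma negPart_le_skorohodCompensator (hg : Continuous g) (hst : s ≤ t) :
    (g s)⁻ ≤ skorohodCompensator g t :=
  le_csSup (bddAbove_image_negPart hg t) ⟨s, ⟨zero_le, hst⟩, rfl⟩

lemma skorohodCompensator_nonneg (hg : Continuous g) (t : ℝ≥0) : 0 ≤ skorohodCompensator g t :=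
  (negPart_nonneg _).trans (negPart_le_skorohodCompensator hg le_rfl)

lemma add_skorohodCompensator_nonneg (hg : Continuous g) (t : ℝ≥0) :
    0 ≤ g t + skorohodCompensator g t := by
  linarith [neg_le_negPart (g t), negPart_le_skorohodCompensator hg (le_refl t)]

lemma skorohodCompensator_le {M : ℝ} (hM : ∀ s ≤ t, (g s)⁻ ≤ M) : skorohodCompensator g t ≤ M :=
  csSup_le ⟨_, ⟨0, ⟨le_rfl, zero_le⟩, rfl⟩⟩ (by rintro _ ⟨s, hs, rfl⟩; exact hM s hs.2)

lemma monotone_skorohodCompensator (hg : Continuous g) : Monotone (skorohodCompensator g) :=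
  fun _ _ hab => skorohodCompensator_le fun _ hs => negPart_le_skorohodCompensator hg (hs.trans hab)

lemma skorohodCompensator_le_of_le (hg : Continuous g) (hle : ∀ s ≤ t, g s ≤ g' s) :
    skorohodCompensator g' t ≤ skorohodCompensator g t :=
  skorohodCompensator_le fun s hs =>
    (negPart_anti (hle s hs)).trans (negPart_le_skorohodCompensator hg hs)

lemma skorohodCompensator_congr (hgg' : ∀ s ≤ t, g s = g' s) :
    skorohodCompensator g t = skorohodCompensator g' t := by
  unfold skorohodCompensator
  congr 1
  exact image_congr fun s hs => by rw [hgg' s hs.2]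

lemma skorohodCompensator_zero (h0 : 0 ≤ g 0) : skorohodCompensator g 0 = 0 := by
  simp [skorohodCompensator, negPart_eq_zero.2 h0]

lemma continuous_skorohodCompensator (hg : Continuous g) : Continuous (skorohodCompensator g) :=
  continuous_sSup_image_Icc_zero (by fun_prop)

lemma exists_add_skorohodCompensator_eq_zero (hg : Continuous g)
    (hpos : 0 < skorohodCompensator g t) :
    ∃ s ≤ t, g s + skorohodCompensator g s = 0 ∧
      skorohodCompensator g s = skorohodCompensator g t := by
  obtain ⟨s, hs, hmax⟩ := isCompact_Icc.exists_sSup_image_eq (nonempty_Icc.2 zero_le)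
    (by fun_prop : Continuous fun s => (g s)⁻).continuousOn
  change skorohodCompensator g t = (g s)⁻ at hmax
  have hgs : (g s)⁻ = -g s := negPart_eq_neg.2 (by
    by_contra! hgs
    rw [negPart_eq_zero.2 hgs.le] at hmax
    exact hpos.ne' hmax)
  have heq : skorohodCompensator g s = skorohodCompensator g t :=
    le_antisymm (monotone_skorohodCompensator hg hs.2)
      (hmax ▸ negPart_le_skorohodCompensator hg le_rfl)
  exact ⟨s, hs.2, by rw [heq, hmax, hgs]; ring, heq⟩

lemma skorohodCompensator_eq_of_forall_ne_zero (hg : Continuous g) {a b : ℝ≥0} (hab : a ≤ b)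
    (hne : ∀ s ∈ Icc a b, g s + skorohodCompensator g s ≠ 0) :
    skorohodCompensator g b = skorohodCompensator g a := by
  by_contra hba
  have hlt := (monotone_skorohodCompensator hg hab).lt_of_ne' hba
  obtain ⟨s, hsb, hzero, hs⟩ := exists_add_skorohodCompensator_eq_zero hg
    ((skorohodCompensator_nonneg hg a).trans_lt hlt)
  have has : a < s := lt_of_not_ge fun hsa => (hs ▸ monotone_skorohodCompensator hg hsa).not_gt hlt
  exact hne s ⟨has.le, hsb⟩ hzero

lemma exists_lt_of_skorohodCompensator_lt (hg : Continuous g) (hg' : Continuous g')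
    (hlt : skorohodCompensator g t < skorohodCompensator g' t) :
    ∃ r ≤ t, g' r + skorohodCompensator g' r = 0 ∧
      skorohodCompensator g' r = skorohodCompensator g' t ∧ g' r < g r := by
  obtain ⟨r, hrt, hzero, hr⟩ := exists_add_skorohodCompensator_eq_zero hg'
    ((skorohodCompensator_nonneg hg t).trans_lt hlt)
  refine ⟨r, hrt, hzero, hr, ?_⟩
  linarith [neg_le_negPart (g r), negPart_le_skorohodCompensator hg hrt]

end SkorohodCompensator

section StabilizingSequence

variable {α β : Type*} {u : ℕ → β → α} {M : β → ℕ}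

lemma eqOn_diag_of_stabilizes [Preorder β]
    (hM : ∀ T, ∀ n ≥ M T, EqOn (u n) (u (M T)) (Iic T)) {T : β} {n : ℕ} (hn : M T ≤ n) :
    EqOn (fun t => u (M t) t) (u n) (Iic T) := fun s hs =>
  (hM s _ (le_max_left (M s) n) (mem_Iic.2 le_rfl)).symm.trans
    ((hM T _ (hn.trans (le_max_right _ _)) hs).trans (hM T n hn hs).symm)

lemma continuous_diag_of_stabilizes [TopologicalSpace α] [TopologicalSpace β] [LinearOrder β]
    [OrderTopology β] [NoMaxOrder β] (hu : ∀ n, Continuous (u n))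
    (hM : ∀ T, ∀ n ≥ M T, EqOn (u n) (u (M T)) (Iic T)) : Continuous fun t => u (M t) t := by
  refine continuous_iff_continuousAt.2 fun t => ?_
  obtain ⟨T, hT⟩ := exists_gt t
  exact (hu (M T)).continuousAt.congr
    (eventuallyEq_of_mem (Iic_mem_nhds hT) (eqOn_diag_of_stabilizes hM le_rfl).symm)

end StabilizingSequence

lemma exists_pos_forall_le_sub_of_le_sub {f : ℝ≥0 → ℝ} (hf : Continuous f) {ε : ℝ} (hε : 0 < ε)
    (T : ℝ≥0) : ∃ δ > 0, ∀ r u : ℝ≥0, r ≤ u → u ≤ T → ε ≤ f u - f r → δ ≤ (u : ℝ) - r := by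
  obtain ⟨δ, hδ, hf_unif⟩ := Metric.uniformContinuousOn_iff.1
    (isCompact_Icc.uniformContinuousOn_of_continuous hf.continuousOn) ε hε
  refine ⟨δ, hδ, fun r u hru huT hrise => ?_⟩
  by_contra! hclose
  have hdist : dist u r < δ := by
    rwa [NNReal.dist_eq, abs_of_nonneg (sub_nonneg.2 (NNReal.coe_le_coe.2 hru))]
  have := hf_unif u ⟨zero_le, huT⟩ r ⟨zero_le, hru.trans huT⟩ hdist
  rw [Real.dist_eq] at this
  linarith [le_abs_self (f u - f r)]

/-- Approximations of `(c⁰, cʰ)`: compensate alternately at `0` and at `h`. -/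
noncomputable def skorohodIter (h : ℝ) (f : ℝ≥0 → ℝ) : ℕ → (ℝ≥0 → ℝ) × (ℝ≥0 → ℝ)
  | 0 => (0, 0)
  | n + 1 =>
    (skorohodCompensator (fun t => f t + (skorohodIter h f n).2 t),
     fun t => -skorohodCompensator
       (fun s => h - (f s + skorohodCompensator (fun x => f x + (skorohodIter h f n).2 x) s)) t)

section SkorohodIter

variable {h : ℝ} {f : ℝ≥0 → ℝ}

lemma skorohodIter_succ_fst (n : ℕ) :
    (skorohodIter h f (n + 1)).1 = skorohodCompensator fun t => f t + (skorohodIter h f n).2 t :=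
  rfl

lemma skorohodIter_succ_snd (n : ℕ) :
    (skorohodIter h f (n + 1)).2 =
      fun t => -skorohodCompensator (fun s => h - (f s + (skorohodIter h f (n + 1)).1 s)) t :=
  rfl

lemma continuous_skorohodIter (hf : Continuous f) (n : ℕ) :
    Continuous (skorohodIter h f n).1 ∧ Continuous (skorohodIter h f n).2 := by
  induction n with
  | zero => exact ⟨continuous_const, continuous_const⟩
  | succ n ih =>
    have hP : Continuous (skorohodIter h f (n + 1)).1 :=
      continuous_skorohodCompensator (hf.add ih.2)
    exact ⟨hP, (continuous_skorohodCompensator (continuous_const.sub (hf.add hP))).neg⟩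

lemma skorohodIter_apply_zero (hf0 : f 0 ∈ Icc 0 h) (n : ℕ) :
    (skorohodIter h f n).1 0 = 0 ∧ (skorohodIter h f n).2 0 = 0 := by
  induction n with
  | zero => exact ⟨rfl, rfl⟩
  | succ n ih =>
    have hP : (skorohodIter h f (n + 1)).1 0 = 0 :=
      skorohodCompensator_zero (by rw [ih.2, add_zero]; exact hf0.1)
    refine ⟨hP, ?_⟩
    rw [skorohodIter_succ_snd, neg_eq_zero]
    exact skorohodCompensator_zero (by rw [hP, add_zero, sub_nonneg]; exact hf0.2)

lemma antitone_skorohodIter_succ_snd (hf : Continuous f) (n : ℕ) :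
    Antitone (skorohodIter h f (n + 1)).2 := fun _ _ hab =>
  neg_le_neg <| monotone_skorohodCompensator
    (continuous_const.sub (hf.add (continuous_skorohodIter hf (n + 1)).1)) hab

lemma skorohodIter_le_succ (hf : Continuous f) (n : ℕ) (t : ℝ≥0) :
    (skorohodIter h f n).1 t ≤ (skorohodIter h f (n + 1)).1 t ∧
      (skorohodIter h f (n + 1)).2 t ≤ (skorohodIter h f n).2 t := by
  induction n generalizing t with
  | zero =>
    exact ⟨skorohodCompensator_nonneg (by fun_prop) t,
      neg_nonpos.2 (skorohodCompensator_nonneg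
        (continuous_const.sub (hf.add (continuous_skorohodIter hf 1).1)) t)⟩
  | succ n ih =>
    have hP : ∀ s, (skorohodIter h f (n + 1)).1 s ≤ (skorohodIter h f (n + 2)).1 s := fun s =>
      skorohodCompensator_le_of_le (hf.add (continuous_skorohodIter hf (n + 1)).2)
        fun x _ => by linarith [(ih x).2]
    exact ⟨hP t, neg_le_neg <| skorohodCompensator_le_of_le
      (continuous_const.sub (hf.add (continuous_skorohodIter hf (n + 2)).1))
      fun x _ => by gcongr; exact hP x⟩

lemma skorohodIter_descent (hf : Continuous f) (m : ℕ) {s : ℝ≥0}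
    (hlt : (skorohodIter h f (m + 2)).2 s < (skorohodIter h f (m + 1)).2 s) :
    ∃ r u : ℝ≥0, r ≤ u ∧ u ≤ s ∧ h ≤ f u - f r ∧
      (skorohodIter h f (m + 1)).2 r < (skorohodIter h f m).2 r := by
  have hP n := (continuous_skorohodIter (h := h) hf n).1
  have hQ n := (continuous_skorohodIter (h := h) hf n).2
  have hgh n : Continuous fun s => h - (f s + (skorohodIter h f n).1 s) :=
    continuous_const.sub (hf.add (hP n))
  have hg0 n : Continuous fun s => f s + (skorohodIter h f n).2 s := hf.add (hQ n)
  obtain ⟨u, hus, hu_top, hu_eq, hPu⟩ :=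
    exists_lt_of_skorohodCompensator_lt (hgh (m + 1)) (hgh (m + 2)) (neg_lt_neg_iff.1 hlt)
  obtain ⟨r, hru, hr_bot, hr_eq, hQr⟩ := exists_lt_of_skorohodCompensator_lt (hg0 m) (hg0 (m + 1))
    (show (skorohodIter h f (m + 1)).1 u < (skorohodIter h f (m + 2)).1 u by linarith)
  refine ⟨r, u, hru, hus, ?_, by linarith⟩
  have hQu : (skorohodIter h f (m + 2)).2 u ≤ (skorohodIter h f (m + 1)).2 r :=
    (antitone_skorohodIter_succ_snd hf (m + 1) hru).trans (skorohodIter_le_succ hf (m + 1) r).2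
  have eQ : (skorohodIter h f (m + 2)).2 u = -skorohodCompensator
      (fun s => h - (f s + (skorohodIter h f (m + 2)).1 s)) u := rfl
  have eP : ∀ x, (skorohodIter h f (m + 2)).1 x = skorohodCompensator
      (fun t => f t + (skorohodIter h f (m + 1)).2 t) x := fun _ => rfl
  linarith [eP u, eP r]

lemma mul_le_of_skorohodIter_snd_lt (hf : Continuous f) {T : ℝ≥0} {δ : ℝ}
    (hrise : ∀ r u : ℝ≥0, r ≤ u → u ≤ T → h ≤ f u - f r → δ ≤ (u : ℝ) - r) (m : ℕ) {s : ℝ≥0}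
    (hsT : s ≤ T) (hlt : (skorohodIter h f (m + 1)).2 s < (skorohodIter h f m).2 s) :
    m * δ ≤ s := by
  induction m generalizing s with
  | zero => simp
  | succ m ih =>
    obtain ⟨r, u, hru, hus, hfru, hQr⟩ := skorohodIter_descent hf m hlt
    have hδ := hrise r u hru (hus.trans hsT) hfru
    have hr := ih (hru.trans (hus.trans hsT)) hQr
    have hus' : (u : ℝ) ≤ s := hus
    push_cast
    linarith

lemma skorohodIter_stabilizes (hh : 0 < h) (hf : Continuous f) (T : ℝ≥0) :
    ∃ M, ∀ n ≥ M, EqOn (skorohodIter h f n).1 (skorohodIter h f M).1 (Iic T) ∧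
      EqOn (skorohodIter h f n).2 (skorohodIter h f M).2 (Iic T) := by
  obtain ⟨δ, hδ, hrise⟩ := exists_pos_forall_le_sub_of_le_sub hf hh T
  obtain ⟨N, hN⟩ := exists_nat_gt (T / δ)
  rw [div_lt_iff₀ hδ] at hN
  have hQ : ∀ n ≥ N, EqOn (skorohodIter h f n).2 (skorohodIter h f N).2 (Iic T) := by
    intro n hn
    induction n, hn using Nat.le_induction with
    | base => exact fun _ _ => rfl
    | succ n hn ih =>
      intro s hs
      rw [← ih hs]
      by_contra hne
      have hsn := mul_le_of_skorohodIter_snd_lt hf hrise n hs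
        ((skorohodIter_le_succ hf n s).2.lt_of_ne hne)
      have hNn : (N : ℝ) * δ ≤ n * δ := by gcongr
      have hsT : (s : ℝ) ≤ T := hs
      linarith
  refine ⟨N + 1, fun n hn => ⟨fun s hs => ?_, fun s hs => ?_⟩⟩
  · obtain ⟨m, rfl⟩ : ∃ m, n = m + 1 := ⟨n - 1, by omega⟩
    refine skorohodCompensator_congr fun x hx => ?_
    rw [hQ m (by omega) (hx.trans hs), hQ N le_rfl (hx.trans hs)]
  · rw [hQ n (by omega) hs, hQ (N + 1) (by omega) hs]

end SkorohodIter

namespace SkorohodPair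

variable {h : ℝ} {f c0 ch d0 dh : ℝ≥0 → ℝ}

lemma of_eq_skorohodCompensator (hf : Continuous f) (hch : Continuous ch) (h0 : c0 0 = 0)
    (hh0 : ch 0 = 0) (hc0_eq : c0 = skorohodCompensator fun t => f t + ch t)
    (hch_eq : ch = fun t => -skorohodCompensator (fun s => h - (f s + c0 s)) t) :
    SkorohodPair h f c0 ch := by
  have hg0 : Continuous fun t => f t + ch t := hf.add hch
  have hc0 : Continuous c0 := hc0_eq ▸ continuous_skorohodCompensator hg0
  have hgh : Continuous fun t => h - (f t + c0 t) := continuous_const.sub (hf.add hc0)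
  have hΛ0 t : f t + ch t + c0 t = f t + ch t + skorohodCompensator (fun t => f t + ch t) t := by
    rw [hc0_eq]
  have hΛh t : h - (f t + ch t + c0 t) =
      h - (f t + c0 t) + skorohodCompensator (fun s => h - (f s + c0 s)) t := by
    rw [hch_eq]
    ring
  refine ⟨hc0, hch, h0, hh0, fun t => ⟨?_, ?_⟩, ?_, ?_, ?_, ?_⟩
  · rw [hΛ0]
    exact add_skorohodCompensator_nonneg hg0 t
  · linarith [hΛh t, add_skorohodCompensator_nonneg hgh t]
  · rw [hc0_eq]
    exact monotone_skorohodCompensator hg0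
  · rw [hch_eq]
    exact fun a b hab => neg_le_neg (monotone_skorohodCompensator hgh hab)
  · intro a b hab hne
    rw [hc0_eq]
    exact skorohodCompensator_eq_of_forall_ne_zero hg0 hab fun s hs => hΛ0 s ▸ hne s hs
  · intro a b hab hne
    rw [hch_eq, neg_inj]
    refine skorohodCompensator_eq_of_forall_ne_zero hgh hab fun s hs => ?_
    rw [← hΛh s]
    exact sub_ne_zero.2 (hne s hs).symm

lemma continuous_path (hf : Continuous f) (p : SkorohodPair h f c0 ch) :
    Continuous fun t => f t + ch t + c0 t :=
  (hf.add p.conth).add p.cont0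

lemma flat0_of_forall_Ioc (p : SkorohodPair h f c0 ch) {a b : ℝ≥0} (hab : a ≤ b)
    (hne : ∀ t ∈ Ioc a b, f t + ch t + c0 t ≠ 0) : c0 b = c0 a :=
  (eq_of_continuous_of_forall_Ioc p.cont0 hab fun x hx =>
    (p.flat0 x b hx.2 fun t ht => hne t ⟨hx.1.trans_le ht.1, ht.2⟩).symm).symm

lemma flath_of_forall_Ioc (p : SkorohodPair h f c0 ch) {a b : ℝ≥0} (hab : a ≤ b)
    (hne : ∀ t ∈ Ioc a b, f t + ch t + c0 t ≠ h) : ch b = ch a :=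
  (eq_of_continuous_of_forall_Ioc p.conth hab fun x hx =>
    (p.flath x b hx.2 fun t ht => hne t ⟨hx.1.trans_le ht.1, ht.2⟩).symm).symm

lemma flat0_of_forall_uIcc (p : SkorohodPair h f c0 ch) {a b : ℝ≥0}
    (hne : ∀ t ∈ uIcc a b, f t + ch t + c0 t ≠ 0) : c0 a = c0 b := by
  rcases le_total a b with hab | hba
  · exact (p.flat0 a b hab fun t ht => hne t (Icc_subset_uIcc ht)).symm
  · exact p.flat0 b a hba fun t ht => hne t (Icc_subset_uIcc' ht)

lemma flath_of_forall_uIcc (p : SkorohodPair h f c0 ch) {a b : ℝ≥0}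
    (hne : ∀ t ∈ uIcc a b, f t + ch t + c0 t ≠ h) : ch a = ch b := by
  rcases le_total a b with hab | hba
  · exact (p.flath a b hab fun t ht => hne t (Icc_subset_uIcc ht)).symm
  · exact p.flath b a hba fun t ht => hne t (Icc_subset_uIcc' ht)

/-- Comparison: after the last time `s ≤ t` at which `Λ ≤ Μ`, the path `Λ` stays off `0`
and `Μ` off `h`, so `c⁰` and `dʰ` are flat there and `Λ - Μ` cannot increase. -/
lemma path_le (hf : Continuous f) (p : SkorohodPair h f c0 ch) (q : SkorohodPair h f d0 dh)
    (t : ℝ≥0) : f t + ch t + c0 t ≤ f t + dh t + d0 t := by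
  by_contra! hlt
  obtain ⟨s, hs, hDs, hpos⟩ := exists_forall_Ioc_pos
    ((p.continuous_path hf).sub (q.continuous_path hf)) (zero_le : 0 ≤ t)
    (by simp [p.init0, p.inith, q.init0, q.inith])
  simp only [Pi.sub_apply] at hDs hpos
  have hc0 : c0 t = c0 s := p.flat0_of_forall_Ioc hs.2 fun x hx =>
    (lt_of_le_of_lt (q.mem_Icc x).1 (sub_pos.1 (hpos x hx))).ne'
  have hdh : dh t = dh s := q.flath_of_forall_Ioc hs.2 fun x hx =>
    (lt_of_lt_of_le (sub_pos.1 (hpos x hx)) (p.mem_Icc x).2).ne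
  linarith [p.antih hs.2, q.mono0 hs.2]

/-- Near every time the common path avoids `0` or `h`, so `c⁰ - d⁰ = dʰ - cʰ` is locally
constant, hence constant. -/
lemma unique (hh : 0 < h) (hf : Continuous f) (p : SkorohodPair h f c0 ch)
    (q : SkorohodPair h f d0 dh) : c0 = d0 ∧ ch = dh := by
  have hpath t : f t + ch t + c0 t = f t + dh t + d0 t :=
    le_antisymm (path_le hf p q t) (path_le hf q p t)
  have hΛ := p.continuous_path hf
  have hloc : IsLocallyConstant (c0 - d0) := by
    refine (IsLocallyConstant.iff_eventually_eq _).2 fun t => ?_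
    by_cases ht : f t + ch t + c0 t = 0
    · have hne : f t + ch t + c0 t ≠ h := ht ▸ hh.ne
      filter_upwards [(hΛ.continuousAt.eventually_ne hne).forall_uIcc] with y hy
      have hp := p.flath_of_forall_uIcc hy
      have hq := q.flath_of_forall_uIcc fun x hx => hpath x ▸ hy x hx
      simp only [Pi.sub_apply]
      linarith [hpath y, hpath t]
    · filter_upwards [(hΛ.continuousAt.eventually_ne ht).forall_uIcc] with y hy
      simp only [Pi.sub_apply]
      rw [p.flat0_of_forall_uIcc hy, q.flat0_of_forall_uIcc fun x hx => hpath x ▸ hy x hx]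
  have hc0 t : c0 t = d0 t := by
    have := hloc.apply_eq_of_preconnectedSpace t 0
    simp only [Pi.sub_apply, p.init0, q.init0, sub_zero] at this
    linarith
  exact ⟨funext hc0, funext fun t => by linarith [hpath t, hc0 t]⟩

end SkorohodPair

theorem exists_skorohodPair {h : ℝ} {f : ℝ≥0 → ℝ} (hh : 0 < h) (hf : Continuous f)
    (hf0 : f 0 ∈ Icc 0 h) : ∃ c0 ch, SkorohodPair h f c0 ch := by
  choose M hM using skorohodIter_stabilizes hh hf
  have hc0 {T n} (hn : M T ≤ n) {s} (hs : s ≤ T) :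
      (skorohodIter h f (M s)).1 s = (skorohodIter h f n).1 s :=
    eqOn_diag_of_stabilizes (u := fun n => (skorohodIter h f n).1) (fun T n hn => (hM T n hn).1)
      hn hs
  have hch {T n} (hn : M T ≤ n) {s} (hs : s ≤ T) :
      (skorohodIter h f (M s)).2 s = (skorohodIter h f n).2 s :=
    eqOn_diag_of_stabilizes (u := fun n => (skorohodIter h f n).2) (fun T n hn => (hM T n hn).2)
      hn hs
  refine ⟨fun t => (skorohodIter h f (M t)).1 t, fun t => (skorohodIter h f (M t)).2 t,
    SkorohodPair.of_eq_skorohodCompensator hf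
    (continuous_diag_of_stabilizes (fun n => (continuous_skorohodIter hf n).2)
      fun T n hn => (hM T n hn).2)
    (skorohodIter_apply_zero hf0 (M 0)).1 (skorohodIter_apply_zero hf0 (M 0)).2 ?_ ?_⟩
  · funext t
    refine (hc0 (Nat.le_succ _) le_rfl).trans ?_
    rw [skorohodIter_succ_fst]
    exact skorohodCompensator_congr fun s hs => by rw [hch le_rfl hs]
  · funext t
    refine (hch (Nat.le_succ _) le_rfl).trans ?_
    rw [skorohodIter_succ_snd]
    exact congrArg Neg.neg (skorohodCompensator_congr fun s hs => by rw [hc0 (Nat.le_succ _) hs])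

theorem two_sided_skorohod_reflection
    (h : ℝ) (hh : 0 < h) (f : ℝ≥0 → ℝ) (hf : Continuous f)
    (hf0 : f 0 ∈ Set.Icc (0 : ℝ) h) :
    ∃! p : (ℝ≥0 → ℝ) × (ℝ≥0 → ℝ), SkorohodPair h f p.1 p.2 := by
  obtain ⟨c0, ch, hp⟩ := exists_skorohodPair hh hf hf0
  refine ⟨(c0, ch), hp, fun q hq => ?_⟩
  obtain ⟨h0, hh'⟩ := hq.unique hh hf hp
  exact Prod.ext h0 hh'
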